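/- Let t: Dom(t) ⊆ E → F be a densely defined adjointable operator between Hilbert A-modules, and let V: E ⊕ F → F ⊕ E be the unitary V(x,y) = (y,−x). If the graph G(t) is orthogonally complemented in E ⊕ F, then the orthogonal complement of V(G(t)) in F ⊕ E equals the graph G(t*) of the adjoint, so that F ⊕ E = V(G(t)) ⊕ G(t*). -/

import Mathlib

/- Framework: Hilbert C*-modules over a C*-algebra `A` (via Mathlib's `CStarModule`),
densely defined operators as `LinearPMap`s, `A`-valued orthogonality, adjoints,
regularity, graphs inside `E ⊕ F`. -/

open scoped InnerProductSpace RightActions WithCStarModule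

/-- The Hilbert C⋆-module class as it stood in the older library: a right `A`-module
structure via `Aᵐᵒᵖ`, with `⟪x, y <• a⟫ = ⟪x, y⟫ * a`, and `A` an `outParam`. -/
class CStarModuleOld (A : outParam Type*) (E : Type*) [NonUnitalSemiring A] [StarRing A]
    [Module ℂ A] [AddCommGroup E] [Module ℂ E] [PartialOrder A] [SMul Aᵐᵒᵖ E] [Norm A] [Norm E]
    extends Inner A E where
  inner_add_right {x} {y} {z} : inner x (y + z) = inner x y + inner x z
  inner_self_nonneg {x} : 0 ≤ inner x x
  inner_self {x} : inner x x = 0 ↔ x = 0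
  inner_op_smul_right {a : A} {x y : E} : inner x (y <• a) = inner x y * a
  inner_smul_right_complex {z : ℂ} {x} {y} : inner x (z • y) = z • inner x y
  star_inner x y : star (inner x y) = inner y x
  norm_eq_sqrt_norm_inner_self x : ‖x‖ = √‖inner x x‖

/-- An old-style Hilbert `A`-module is a current-style `CStarModule` over `Aᵐᵒᵖ`. -/
noncomputable instance CStarModuleOld.toCStarModuleOp {A E : Type*} [NonUnitalCStarAlgebra A]
    [PartialOrder A] [AddCommGroup E] [Module ℂ E] [SMul Aᵐᵒᵖ E] [Norm E] [CStarModuleOld A E] : CStarModule Aᵐᵒᵖ E where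
  inner x y := MulOpposite.op (inner A x y)
  inner_add_right := by
    intro x y z
    simp [CStarModuleOld.inner_add_right]
  inner_self_nonneg := CStarModuleOld.inner_self_nonneg
  inner_self := by
    intro x
    simp [CStarModuleOld.inner_self]
  inner_op_smul_right := by
    intro a x y
    apply MulOpposite.unop_injective
    exact CStarModuleOld.inner_op_smul_right (a := MulOpposite.unop a)
  inner_smul_right_complex := by
    intro z x y
    apply MulOpposite.unop_injective
    exact CStarModuleOld.inner_smul_right_complex
  star_inner x y := by
    apply MulOpposite.unop_injective
    exact CStarModuleOld.star_inner x y
  norm_eq_sqrt_norm_inner_self x := CStarModuleOld.norm_eq_sqrt_norm_inner_self x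

/-- The type synonym `C⋆ᵐᵒᵈ E` of the older library. -/
def WithCStarModuleOld (E : Type*) := E

notation "C⋆ᵐᵒᵈ" => WithCStarModuleOld

/-- The canonical equivalence between `C⋆ᵐᵒᵈ E` and `E`. -/
def WithCStarModuleOld.equiv (E : Type*) : C⋆ᵐᵒᵈ E ≃ E := Equiv.refl _

instance WithCStarModuleOld.instAddCommGroup (E : Type*) [AddCommGroup E] :
    AddCommGroup (C⋆ᵐᵒᵈ E) := ‹AddCommGroup E›

instance WithCStarModuleOld.instModule (R E : Type*) [Semiring R] [AddCommGroup E]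
    [Module R E] : Module R (C⋆ᵐᵒᵈ E) := ‹Module R E›

instance WithCStarModuleOld.instSMul (R E : Type*) [SMul R E] : SMul R (C⋆ᵐᵒᵈ E) :=
  ‹SMul R E›

section OldProd

variable {A : Type*} [NonUnitalCStarAlgebra A] [PartialOrder A] [StarOrderedRing A]
variable {E F : Type*}
  [NormedAddCommGroup E] [Module ℂ E] [SMul Aᵐᵒᵖ E] [CStarModuleOld A E]
  [NormedAddCommGroup F] [Module ℂ F] [SMul Aᵐᵒᵖ F] [CStarModuleOld A F]

noncomputable instance WithCStarModuleOld.instNormedAddCommGroupProd :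
    NormedAddCommGroup (C⋆ᵐᵒᵈ (E × F)) :=
  inferInstanceAs (NormedAddCommGroup (WithCStarModule Aᵐᵒᵖ (E × F)))

/-- The old `CStarModule A (C⋆ᵐᵒᵈ (E × F))`, with `⟪x, y⟫ = ⟪x.1, y.1⟫ + ⟪x.2, y.2⟫`. -/
noncomputable instance WithCStarModuleOld.instCStarModuleProd :
    CStarModuleOld A (C⋆ᵐᵒᵈ (E × F)) where
  inner x y := inner A (WithCStarModuleOld.equiv _ x).1 (WithCStarModuleOld.equiv _ y).1 +
    inner A (WithCStarModuleOld.equiv _ x).2 (WithCStarModuleOld.equiv _ y).2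
  inner_add_right {x y z} := congrArg MulOpposite.unop
    (CStarModule.inner_add_right (A := Aᵐᵒᵖ) (E := WithCStarModule Aᵐᵒᵖ (E × F))
      (x := x) (y := y) (z := z))
  inner_self_nonneg {x} :=
    CStarModule.inner_self_nonneg (A := Aᵐᵒᵖ) (E := WithCStarModule Aᵐᵒᵖ (E × F)) (x := x)
  inner_self {x} := (MulOpposite.op_eq_zero_iff _).symm.trans
    (CStarModule.inner_self (A := Aᵐᵒᵖ) (E := WithCStarModule Aᵐᵒᵖ (E × F)) (x := x))
  inner_op_smul_right {a x y} := congrArg MulOpposite.unop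
    (CStarModule.inner_op_smul_right (A := Aᵐᵒᵖ) (E := WithCStarModule Aᵐᵒᵖ (E × F))
      (a := MulOpposite.op a) (x := x) (y := y))
  inner_smul_right_complex {z x y} := congrArg MulOpposite.unop
    (CStarModule.inner_smul_right_complex (A := Aᵐᵒᵖ) (E := WithCStarModule Aᵐᵒᵖ (E × F))
      (z := z) (x := x) (y := y))
  star_inner x y := congrArg MulOpposite.unop
    (CStarModule.star_inner (A := Aᵐᵒᵖ) (E := WithCStarModule Aᵐᵒᵖ (E × F)) x y)
  norm_eq_sqrt_norm_inner_self x :=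
    CStarModule.norm_eq_sqrt_norm_inner_self (A := Aᵐᵒᵖ) (E := WithCStarModule Aᵐᵒᵖ (E × F)) x

end OldProd

namespace RegularOperators

variable (A : Type*) [NonUnitalCStarAlgebra A] [PartialOrder A] [StarOrderedRing A]

section Defs

variable {E F : Type*}
  [NormedAddCommGroup E] [Module ℂ E] [SMul Aᵐᵒᵖ E] [CStarModuleOld A E]
  [NormedAddCommGroup F] [Module ℂ F] [SMul Aᵐᵒᵖ F] [CStarModuleOld A F]

/-- Orthogonal complement of a subset w.r.t. the `A`-valued inner product. -/
def ortho (S : Set E) : Set E := {y | ∀ u ∈ S, ⟪u, y⟫_A = 0}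

/-- `S` is orthogonally complemented (an orthogonal summand): every element of `E`
decomposes as a sum of an element of `S` and an element of `S^⊥`. -/
def OrthoComplemented (S : Set E) : Prop := ∀ z : E, ∃ u ∈ S, ∃ v ∈ ortho A S, z = u + v

/-- A partially defined operator is `A`-linear (for the right `A`-module action). -/
def AModuleMap (t : E →ₗ.[ℂ] F) : Prop :=
  ∀ (a : A) (x : t.domain), ∃ hx : (x : E) <• a ∈ t.domain, t ⟨(x : E) <• a, hx⟩ = (t x) <• a

/-- Kernel of a partially defined operator, as a subset of `E`. -/
def kerSet (t : E →ₗ.[ℂ] F) : Set E := {x | ∃ hx : x ∈ t.domain, t ⟨x, hx⟩ = 0}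

/-- Range of a partially defined operator. -/
def ranSet (t : E →ₗ.[ℂ] F) : Set F := {y | ∃ x : t.domain, t x = y}

/-- Domain of the adjoint: those `y` for which some `z` satisfies `⟪tx, y⟫ = ⟪x, z⟫`
for all `x` in the domain of `t`. -/
def adjDomain (t : E →ₗ.[ℂ] F) : Set F :=
  {y | ∃ z : E, ∀ x : t.domain, ⟪t x, y⟫_A = ⟪(x : E), z⟫_A}

/-- `s` is the adjoint operator `t*` of `t`. -/
structure IsAdjoint (t : E →ₗ.[ℂ] F) (s : F →ₗ.[ℂ] E) : Prop where
  dom : (s.domain : Set F) = adjDomain A t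
  inner_eq : ∀ (x : t.domain) (y : s.domain), ⟪t x, (y : F)⟫_A = ⟪(x : E), s y⟫_A

/-- The range of `1 + t*t` (where `s` plays the role of `t*`). -/
def onePlusRange (t : E →ₗ.[ℂ] F) (s : F →ₗ.[ℂ] E) : Set E :=
  {u | ∃ (x : t.domain) (h : t x ∈ s.domain), (x : E) + s ⟨t x, h⟩ = u}

/-- `t` is a regular operator with adjoint `s`: it is `A`-linear, densely defined,
closed, adjointable with densely defined adjoint, and `1 + t*t` has dense range. -/
structure IsRegular (t : E →ₗ.[ℂ] F) (s : F →ₗ.[ℂ] E) : Prop where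
  amod : AModuleMap A t
  denseDom : Dense (t.domain : Set E)
  closedGraph : IsClosed (t.graph : Set (E × F))
  adj : IsAdjoint A t s
  denseAdjDom : Dense (s.domain : Set F)
  denseOnePlusRange : Dense (onePlusRange t s)

/-- The graph of `t` inside the Hilbert `A`-module `E ⊕ F`. -/
def graphSet (t : E →ₗ.[ℂ] F) : Set (C⋆ᵐᵒᵈ (E × F)) :=
  {w | ∃ x : t.domain, WithCStarModuleOld.equiv (E × F) w = ((x : E), t x)}

/-- The range of `P_F ∘ P_{G(t)^⊥}`, i.e. the image of `G(t)^⊥ ⊆ E ⊕ F` under the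
canonical projection onto `F`. -/
def pfRange (t : E →ₗ.[ℂ] F) : Set F :=
  {y | ∃ w ∈ ortho A (graphSet t), (WithCStarModuleOld.equiv (E × F) w).2 = y}

end Defs

end RegularOperators

open RegularOperators
variable {A : Type*} [NonUnitalCStarAlgebra A] [PartialOrder A] [StarOrderedRing A]
variable {E F : Type*}
  [NormedAddCommGroup E] [Module ℂ E] [SMul Aᵐᵒᵖ E] [CStarModuleOld A E] [CompleteSpace E]
  [NormedAddCommGroup F] [Module ℂ F] [SMul Aᵐᵒᵖ F] [CStarModuleOld A F] [CompleteSpace F]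

/-!
For `(y, z) ∈ F ⊕ E` one has `⟪(tx, -x), (y, z)⟫ = ⟪tx, y⟫ - ⟪x, z⟫`, so `(y, z) ⊥ V(G(t))` says
exactly that `y ∈ Dom(t*)` with witness `z`, and density of `Dom(t)` forces `z = t*y`. Since `V`
is an additive bijection preserving the inner product, it carries the decomposition
`E ⊕ F = G(t) + G(t)^⊥` to `F ⊕ E = V(G(t)) + V(G(t))^⊥`.
-/

namespace CStarModuleOld

section
variable {A M : Type*} [NonUnitalCStarAlgebra A] [PartialOrder A]
  [NormedAddCommGroup M] [Module ℂ M] [SMul Aᵐᵒᵖ M] [CStarModuleOld A M]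

lemma inner_neg_left (x y : M) : ⟪-x, y⟫_A = -⟪x, y⟫_A :=
  congrArg MulOpposite.unop (CStarModule.inner_neg_left (A := Aᵐᵒᵖ) (E := M) (x := x) (y := y))

lemma inner_neg_right (x y : M) : ⟪x, -y⟫_A = -⟪x, y⟫_A :=
  congrArg MulOpposite.unop (CStarModule.inner_neg_right (A := Aᵐᵒᵖ) (E := M) (x := x) (y := y))

lemma inner_sub_left (x y z : M) : ⟪x - y, z⟫_A = ⟪x, z⟫_A - ⟪y, z⟫_A :=
  congrArg MulOpposite.unop
    (CStarModule.inner_sub_left (A := Aᵐᵒᵖ) (E := M) (x := x) (y := y) (z := z))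

lemma inner_sub_right (x y z : M) : ⟪x, y - z⟫_A = ⟪x, y⟫_A - ⟪x, z⟫_A :=
  congrArg MulOpposite.unop
    (CStarModule.inner_sub_right (A := Aᵐᵒᵖ) (E := M) (x := x) (y := y) (z := z))

variable [StarOrderedRing A]

lemma norm_inner_le (x y : M) : ‖⟪x, y⟫_A‖ ≤ ‖x‖ * ‖y‖ :=
  CStarModule.norm_inner_le (A := Aᵐᵒᵖ) M

lemma continuous_inner_left (y : M) : Continuous fun x : M => ⟪x, y⟫_A :=
  (LipschitzWith.of_dist_le_mul (K := ‖y‖₊) fun x x' => by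
    rw [dist_eq_norm, dist_eq_norm, ← inner_sub_left, coe_nnnorm, mul_comm]
    exact norm_inner_le _ _).continuous

lemma ext_inner_left_of_dense {D : Set M} (hD : Dense D) {y z : M}
    (h : ∀ x ∈ D, ⟪x, y⟫_A = ⟪x, z⟫_A) : y = z := by
  have hall : ∀ x, ⟪x, y⟫_A = ⟪x, z⟫_A :=
    hD.induction h (isClosed_eq (continuous_inner_left y) (continuous_inner_left z))
  rw [← sub_eq_zero, ← inner_self, inner_sub_right, hall, sub_self]

end

end CStarModuleOld

namespace WithCStarModuleOld

section
variable {E F : Type*} [AddCommGroup E] [AddCommGroup F]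

/-- The unitary `V` of the paper. -/
def swapNeg : C⋆ᵐᵒᵈ (E × F) ≃+ C⋆ᵐᵒᵈ (F × E) :=
  AddEquiv.prodComm.trans (AddEquiv.prodCongr (AddEquiv.refl F) (AddEquiv.neg E))

lemma equiv_swapNeg (w : C⋆ᵐᵒᵈ (E × F)) :
    equiv _ (swapNeg w) = ((equiv _ w).2, -(equiv _ w).1) :=
  rfl

end

section
variable {A E F : Type*} [NonUnitalCStarAlgebra A] [PartialOrder A] [StarOrderedRing A]
  [NormedAddCommGroup E] [Module ℂ E] [SMul Aᵐᵒᵖ E] [CStarModuleOld A E]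
  [NormedAddCommGroup F] [Module ℂ F] [SMul Aᵐᵒᵖ F] [CStarModuleOld A F]

lemma inner_prod (u v : C⋆ᵐᵒᵈ (E × F)) :
    ⟪u, v⟫_A = ⟪(equiv _ u).1, (equiv _ v).1⟫_A + ⟪(equiv _ u).2, (equiv _ v).2⟫_A :=
  rfl

lemma inner_swapNeg (u v : C⋆ᵐᵒᵈ (E × F)) : ⟪swapNeg u, swapNeg v⟫_A = ⟪u, v⟫_A := by
  rw [inner_prod, inner_prod, equiv_swapNeg, equiv_swapNeg, CStarModuleOld.inner_neg_left,
    CStarModuleOld.inner_neg_right, neg_neg, add_comm]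

end

end WithCStarModuleOld

namespace RegularOperators

open WithCStarModuleOld

section
variable {A M N : Type*} [NonUnitalCStarAlgebra A] [PartialOrder A]
  [NormedAddCommGroup M] [Module ℂ M] [SMul Aᵐᵒᵖ M] [CStarModuleOld A M]
  [NormedAddCommGroup N] [Module ℂ N] [SMul Aᵐᵒᵖ N] [CStarModuleOld A N]
  {e : M ≃+ N}

lemma ortho_image (he : ∀ u v, ⟪e u, e v⟫_A = ⟪u, v⟫_A) (S : Set M) :
    ortho A (e '' S) = e '' ortho A S := by
  ext y
  constructor
  · intro hy
    refine ⟨e.symm y, fun u hu => ?_, e.apply_symm_apply y⟩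
    rw [← he, e.apply_symm_apply]
    exact hy _ (Set.mem_image_of_mem e hu)
  · rintro ⟨v, hv, rfl⟩ _ ⟨u, hu, rfl⟩
    rw [he]
    exact hv u hu

lemma OrthoComplemented.image (he : ∀ u v, ⟪e u, e v⟫_A = ⟪u, v⟫_A) {S : Set M}
    (hS : OrthoComplemented A S) : OrthoComplemented A (e '' S) := by
  intro z
  obtain ⟨u, hu, v, hv, hsum⟩ := hS (e.symm z)
  refine ⟨e u, Set.mem_image_of_mem e hu, e v, ?_, ?_⟩
  · rw [ortho_image he]
    exact Set.mem_image_of_mem e hv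
  · rw [← map_add, ← hsum, e.apply_symm_apply]

end

section
variable {A E F : Type*} [NonUnitalCStarAlgebra A] [PartialOrder A] [StarOrderedRing A]
  [NormedAddCommGroup E] [Module ℂ E] [SMul Aᵐᵒᵖ E] [CStarModuleOld A E]
  [NormedAddCommGroup F] [Module ℂ F] [SMul Aᵐᵒᵖ F] [CStarModuleOld A F]
  {t : E →ₗ.[ℂ] F} {s : F →ₗ.[ℂ] E}

lemma graphSet_eq_range :
    graphSet t = Set.range fun x : t.domain => (equiv (E × F)).symm ((x : E), t x) :=
  Set.ext fun _ => exists_congr fun _ => by rw [Equiv.symm_apply_eq, eq_comm]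

lemma image_swapNeg_graphSet :
    swapNeg '' graphSet t =
      {w : C⋆ᵐᵒᵈ (F × E) | ∃ x : t.domain, equiv (F × E) w = (t x, -(x : E))} := by
  rw [graphSet_eq_range, ← Set.range_comp]
  exact Set.ext fun _ => exists_congr fun _ => (equiv (F × E)).symm_apply_eq.trans eq_comm

lemma IsAdjoint.mem_graphSet_iff (hdense : Dense (t.domain : Set E)) (hadj : IsAdjoint A t s)
    (w : C⋆ᵐᵒᵈ (F × E)) :
    w ∈ graphSet s ↔ ∀ x : t.domain, ⟪t x, (equiv _ w).1⟫_A = ⟪(x : E), (equiv _ w).2⟫_A := by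
  constructor
  · rintro ⟨y, hy⟩ x
    rw [hy]
    exact hadj.inner_eq x y
  · intro h
    have hdom : (equiv _ w).1 ∈ s.domain := by
      rw [← SetLike.mem_coe, hadj.dom]
      exact ⟨_, h⟩
    refine ⟨⟨_, hdom⟩, Prod.ext rfl ?_⟩
    refine CStarModuleOld.ext_inner_left_of_dense hdense fun x hx => ?_
    rw [← h ⟨x, hx⟩, hadj.inner_eq ⟨x, hx⟩ ⟨_, hdom⟩]

lemma IsAdjoint.ortho_image_swapNeg_graphSet (hdense : Dense (t.domain : Set E))
    (hadj : IsAdjoint A t s) : ortho A (swapNeg '' graphSet t) = graphSet s := by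
  ext w
  rw [hadj.mem_graphSet_iff hdense, graphSet_eq_range, ← Set.range_comp]
  refine Set.forall_mem_range.trans (forall_congr' fun x => ?_)
  change ⟪t x, (equiv _ w).1⟫_A + ⟪-(x : E), (equiv _ w).2⟫_A = 0 ↔ _
  rw [CStarModuleOld.inner_neg_left, ← sub_eq_add_neg, sub_eq_zero]

end

end RegularOperators

theorem ortho_V_graph_eq_graph_adjoint_general (t : E →ₗ.[ℂ] F) (s : F →ₗ.[ℂ] E)
    (hdense : Dense (t.domain : Set E))
    (hadj : IsAdjoint A t s)
    (hgraph : OrthoComplemented A (graphSet t)) :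
    ortho A {w : C⋆ᵐᵒᵈ (F × E) |
        ∃ x : t.domain, WithCStarModuleOld.equiv (F × E) w = (t x, -(x : E))} =
      {w : C⋆ᵐᵒᵈ (F × E) |
        ∃ y : s.domain, WithCStarModuleOld.equiv (F × E) w = ((y : F), s y)} ∧
    ∀ w : C⋆ᵐᵒᵈ (F × E),
      ∃ u ∈ {w : C⋆ᵐᵒᵈ (F × E) |
        ∃ x : t.domain, WithCStarModuleOld.equiv (F × E) w = (t x, -(x : E))},
      ∃ v ∈ {w : C⋆ᵐᵒᵈ (F × E) |
        ∃ y : s.domain, WithCStarModuleOld.equiv (F × E) w = ((y : F), s y)},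
      w = u + v := by
  have hortho : ortho A (WithCStarModuleOld.swapNeg '' graphSet t) = graphSet s :=
    hadj.ortho_image_swapNeg_graphSet hdense
  have hcompl : OrthoComplemented A (WithCStarModuleOld.swapNeg '' graphSet t) :=
    hgraph.image WithCStarModuleOld.inner_swapNeg
  rw [OrthoComplemented, hortho] at hcompl
  rw [← image_swapNeg_graphSet]
  exact ⟨hortho, hcompl⟩

/-- for a densely defined adjointable operator `t` whose graph is
orthogonally complemented in `E ⊕ F`, with `V : E ⊕ F → F ⊕ E`, `V(x,y) = (y,-x)`,
one has `(V(G(t)))^⊥ = G(t*)`, so that `F ⊕ E = V(G(t)) ⊕ G(t*)`. -/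
theorem ortho_V_graph_eq_graph_adjoint (t : E →ₗ.[ℂ] F) (s : F →ₗ.[ℂ] E)
    (hmod : AModuleMap A t) (hdense : Dense (t.domain : Set E))
    (hadj : IsAdjoint A t s)
    (hgraph : OrthoComplemented A (graphSet t)) :
    ortho A {w : C⋆ᵐᵒᵈ (F × E) |
        ∃ x : t.domain, WithCStarModuleOld.equiv (F × E) w = (t x, -(x : E))} =
      {w : C⋆ᵐᵒᵈ (F × E) |
        ∃ y : s.domain, WithCStarModuleOld.equiv (F × E) w = ((y : F), s y)} ∧
    ∀ w : C⋆ᵐᵒᵈ (F × E),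
      ∃ u ∈ {w : C⋆ᵐᵒᵈ (F × E) |
        ∃ x : t.domain, WithCStarModuleOld.equiv (F × E) w = (t x, -(x : E))},
      ∃ v ∈ {w : C⋆ᵐᵒᵈ (F × E) |
        ∃ y : s.domain, WithCStarModuleOld.equiv (F × E) w = ((y : F), s y)},
      w = u + v :=
  ortho_V_graph_eq_graph_adjoint_general t s hdense hadj hgraph
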